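/- Let λ ≥ 0 and let f : [−1,1] → ℝ be a broken solution with eigenvalue λ satisfying f(−1) = 0 and f(1) = 1. Then r(λ) > 0 and f(0) = B·e^b / r(λ). -/

import Mathlib

/-!
On each half-interval `g x = exp (b x) f x` solves `g'' = s g` with `s = sFun q b lam ≥ 0`, so
its Wronskian with any solution `v` of `v'' = s v` is constant there. Let `(c, σ)` be the
solutions with `c 0 = σ' 0 = 1` and `c' 0 = σ 0 = 0`. Taking `v x = σ (x + 1)` on `[-1, 0]` and
`v x = σ (1 - x)` on `[0, 1]`, both `v` vanish at the outer endpoint, so the boundary values give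
one linear relation between `f 0` and each one-sided derivative `f' (0±)`; the jump condition
eliminates the derivatives and leaves `f 0 * r = B * exp b`, where `c 1` and `σ 1` are the two
series in `rFun`. Positivity of `r` follows from `c 1 ^ 2 - s * σ 1 ^ 2 = 1` and `b ^ 2 ≤ s`,
which give `|b σ 1| < c 1`.
-/

/-- A "broken solution" with eigenvalue `lam` of the ODE `f'' + 2·b·f' = (log q)²·lam·f`
on `[-1,1]`: `f` is continuous on `[-1,1]`, twice continuously differentiable on
`[-1,0]` and on `[0,1]` (with one-sided derivatives at the endpoints), satisfies the
ODE on `(-1,0) ∪ (0,1)`, and its one-sided derivatives at `0` satisfy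
`f'(0-) = B · f'(0+)`. -/
def IsBrokenSolution (q b B lam : ℝ) (f : ℝ → ℝ) : Prop :=
  ContinuousOn f (Set.Icc (-1) 1) ∧
  ContDiffOn ℝ 2 f (Set.Icc (-1) 0) ∧
  ContDiffOn ℝ 2 f (Set.Icc 0 1) ∧
  (∀ x ∈ Set.Ioo (-1 : ℝ) 0 ∪ Set.Ioo (0 : ℝ) 1,
    deriv (deriv f) x + 2 * b * deriv f x = (Real.log q) ^ 2 * lam * f x) ∧
  derivWithin f (Set.Icc (-1) 0) 0 = B * derivWithin f (Set.Icc 0 1) 0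

/-- `s(λ) = b² + (log q)²·λ`. -/
noncomputable def sFun (q b : ℝ) (lam : ℝ) : ℝ := b ^ 2 + (Real.log q) ^ 2 * lam

/-- `r(λ) = (B+1)·∑ s(λ)ⁿ/(2n)! + (B−1)·b·∑ s(λ)ⁿ/(2n+1)!`. -/
noncomputable def rFun (q b B : ℝ) (lam : ℝ) : ℝ :=
  (B + 1) * ∑' n : ℕ, sFun q b lam ^ n / ((2 * n).factorial : ℝ) +
    (B - 1) * b * ∑' n : ℕ, sFun q b lam ^ n / ((2 * n + 1).factorial : ℝ)

open Set Real Nat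

/-- For `s = t ^ 2 > 0` this is `(cosh (t x), sinh (t x) / t)`; for `s = 0` it is `(1, x)`. -/
structure IsCoshSinhPair (s : ℝ) (c σ : ℝ → ℝ) : Prop where
  hasDerivAt_fst : ∀ x, HasDerivAt c (s * σ x) x
  hasDerivAt_snd : ∀ x, HasDerivAt σ (c x) x
  fst_zero : c 0 = 1
  snd_zero : σ 0 = 0

namespace IsCoshSinhPair

variable {s : ℝ} {c σ : ℝ → ℝ}

theorem sq_sub_mul_sq (h : IsCoshSinhPair s c σ) (x : ℝ) : c x ^ 2 - s * σ x ^ 2 = 1 := by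
  have hW : ∀ y, HasDerivAt (fun y => c y ^ 2 - s * σ y ^ 2) 0 y := fun y => by
    refine (((h.hasDerivAt_fst y).pow 2).sub (((h.hasDerivAt_snd y).pow 2).const_mul s))
      |>.congr_deriv ?_
    ring
  have hconst := is_const_of_deriv_eq_zero (fun y => (hW y).differentiableAt)
    (fun y => (hW y).deriv) x 0
  simpa [h.fst_zero, h.snd_zero] using hconst

end IsCoshSinhPair

theorem exists_isCoshSinhPair {s : ℝ} (hs : 0 ≤ s) :
    ∃ c σ, IsCoshSinhPair s c σ ∧ c 1 = ∑' n : ℕ, s ^ n / ((2 * n)! : ℝ) ∧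
      σ 1 = ∑' n : ℕ, s ^ n / ((2 * n + 1)! : ℝ) := by
  rcases hs.eq_or_lt with rfl | hs
  · refine ⟨fun _ => 1, id, ⟨fun x => ?_, hasDerivAt_id, rfl, rfl⟩, ?_, ?_⟩
    · simpa using hasDerivAt_const x (1 : ℝ)
    all_goals rw [tsum_eq_single 0 fun n hn => by simp [hn]]; simp
  · set t := √s
    have ht : t ≠ 0 := (sqrt_pos.2 hs).ne'
    have hts : t ^ 2 = s := sq_sqrt hs.le
    refine ⟨fun x => cosh (t * x), fun x => sinh (t * x) / t,
      ⟨fun x => ?_, fun x => ?_, ?_, ?_⟩, ?_, ?_⟩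
    · refine ((hasDerivAt_id' x).const_mul t).cosh.congr_deriv ?_
      field_simp
      rw [← hts]; ring
    · refine (((hasDerivAt_id' x).const_mul t).sinh.div_const t).congr_deriv ?_
      field_simp
    · simp
    · simp
    · simp only [mul_one, cosh_eq_tsum, ← hts, pow_mul]
    · simp only [mul_one]
      refine ((hasSum_sinh t).div_const t).tsum_eq.symm.trans (tsum_congr fun n => ?_)
      rw [← hts, pow_succ, pow_mul]
      field_simp

theorem add_one_mul_add_sub_one_mul_pos {B b s C S : ℝ} (hB : 0 < B) (hbs : b ^ 2 ≤ s)
    (hC : 0 ≤ C) (h : C ^ 2 - s * S ^ 2 = 1) : 0 < (B + 1) * C + (B - 1) * b * S := by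
  have hbS : |b * S| < C :=
    abs_lt_of_sq_lt_sq (by nlinarith [mul_le_mul_of_nonneg_right hbs (sq_nonneg S)]) hC
  have : |(B - 1) * (b * S)| ≤ (B + 1) * |b * S| := by
    rw [abs_mul]; gcongr; exact abs_le.2 ⟨by linarith, by linarith⟩
  nlinarith [neg_abs_le ((B - 1) * (b * S))]

section IntervalODE

variable {f : ℝ → ℝ} {a₁ a₂ x : ℝ}

theorem ContDiffOn.hasDerivAt_derivWithin_Icc (hf : ContDiffOn ℝ 2 f (Icc a₁ a₂))
    (hx : x ∈ Ioo a₁ a₂) : HasDerivAt f (derivWithin f (Icc a₁ a₂) x) x := by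
  rw [derivWithin_of_mem_nhds (Icc_mem_nhds hx.1 hx.2)]
  exact ((hf.contDiffAt (Icc_mem_nhds hx.1 hx.2)).differentiableAt two_ne_zero).hasDerivAt

theorem ContDiffOn.hasDerivAt_derivWithin_Icc_deriv (hf : ContDiffOn ℝ 2 f (Icc a₁ a₂))
    (hx : x ∈ Ioo a₁ a₂) : HasDerivAt (derivWithin f (Icc a₁ a₂)) (deriv (deriv f) x) x := by
  have hdf : ContDiffOn ℝ 1 (deriv f) (Ioo a₁ a₂) :=
    (hf.mono Ioo_subset_Icc_self).deriv_of_isOpen isOpen_Ioo (by norm_num)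
  refine ((hdf.differentiableOn one_ne_zero).differentiableAt (isOpen_Ioo.mem_nhds hx))
    |>.hasDerivAt.congr_of_eventuallyEq ?_
  filter_upwards [isOpen_Ioo.mem_nhds hx] with y hy
  exact derivWithin_of_mem_nhds (Icc_mem_nhds hy.1 hy.2)

end IntervalODE

theorem wronskian_eq_of_hasDerivAt {s a₁ a₂ : ℝ} (h : a₁ < a₂) {g g' v v' : ℝ → ℝ}
    (hg : ContinuousOn g (Icc a₁ a₂)) (hg' : ContinuousOn g' (Icc a₁ a₂))
    (hdg : ∀ x ∈ Ioo a₁ a₂, HasDerivAt g (g' x) x)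
    (hdg' : ∀ x ∈ Ioo a₁ a₂, HasDerivAt g' (s * g x) x)
    (hdv : ∀ x, HasDerivAt v (v' x) x) (hdv' : ∀ x, HasDerivAt v' (s * v x) x) :
    g a₂ * v' a₂ - g' a₂ * v a₂ = g a₁ * v' a₁ - g' a₁ * v a₁ := by
  have hv : Continuous v := continuous_iff_continuousAt.2 fun x => (hdv x).continuousAt
  have hv' : Continuous v' := continuous_iff_continuousAt.2 fun x => (hdv' x).continuousAt
  obtain ⟨_, _, hslope⟩ := exists_hasDerivAt_eq_slope (fun x => g x * v' x - g' x * v x)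
    (fun _ => 0) h ((hg.mul hv'.continuousOn).sub (hg'.mul hv.continuousOn))
    fun x hx => (((hdg x hx).mul (hdv' x)).sub ((hdg' x hx).mul (hdv x))).congr_deriv (by ring)
  rw [eq_comm, div_eq_zero_iff, sub_eq_zero] at hslope
  exact hslope.resolve_right (sub_ne_zero.2 h.ne')

theorem exp_mul_wronskian_eq {b K a₁ a₂ : ℝ} (h : a₁ < a₂) {f : ℝ → ℝ}
    (hf : ContDiffOn ℝ 2 f (Icc a₁ a₂))
    (hode : ∀ x ∈ Ioo a₁ a₂, deriv (deriv f) x + 2 * b * deriv f x = K * f x)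
    {v v' : ℝ → ℝ} (hdv : ∀ x, HasDerivAt v (v' x) x)
    (hdv' : ∀ x, HasDerivAt v' ((b ^ 2 + K) * v x) x) :
    exp (b * a₂) * (f a₂ * v' a₂ - (b * f a₂ + derivWithin f (Icc a₁ a₂) a₂) * v a₂) =
      exp (b * a₁) * (f a₁ * v' a₁ - (b * f a₁ + derivWithin f (Icc a₁ a₂) a₁) * v a₁) := by
  have hfc : ContinuousOn f (Icc a₁ a₂) := hf.continuousOn
  have hf'c : ContinuousOn (derivWithin f (Icc a₁ a₂)) (Icc a₁ a₂) :=
    (hf.derivWithin (uniqueDiffOn_Icc h) (m := 1) (by norm_num)).continuousOn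
  have hexp : ∀ x, HasDerivAt (fun y => exp (b * y)) (exp (b * x) * b) x := fun x =>
    ((hasDerivAt_id' x).const_mul b).exp.congr_deriv (by ring)
  have := wronskian_eq_of_hasDerivAt (s := b ^ 2 + K) h (g := fun x => exp (b * x) * f x)
    (g' := fun x => exp (b * x) * (b * f x + derivWithin f (Icc a₁ a₂) x))
    (by fun_prop) (by fun_prop) (fun x hx => ?_) (fun x hx => ?_) hdv hdv'
  · linear_combination this
  · exact ((hexp x).mul (hf.hasDerivAt_derivWithin_Icc hx)).congr_deriv (by ring)
  · have hf' := hf.hasDerivAt_derivWithin_Icc hx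
    have hf'' := hf.hasDerivAt_derivWithin_Icc_deriv hx
    rw [show deriv (deriv f) x = K * f x - 2 * b * derivWithin f (Icc a₁ a₂) x by
      linear_combination hode x hx - 2 * b * hf'.deriv] at hf''
    exact ((hexp x).mul ((hf'.const_mul b).add hf'')).congr_deriv
      (by simp only [Pi.add_apply]; ring)

theorem brokenSolution_value_at_zero_up_general
    (q b B : ℝ) (hB : 0 < B) (lam : ℝ) (hlam : 0 ≤ lam) (f : ℝ → ℝ)
    (hf : IsBrokenSolution q b B lam f) (hf1 : f (-1) = 0) (hf2 : f 1 = 1) :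
    0 < rFun q b B lam ∧ f 0 = B * Real.exp b / rFun q b B lam := by
  obtain ⟨-, hfl, hfr, hode, hjump⟩ := hf
  have hbs : b ^ 2 ≤ sFun q b lam := le_add_of_nonneg_right (mul_nonneg (sq_nonneg _) hlam)
  have hs : 0 ≤ sFun q b lam := (sq_nonneg b).trans hbs
  obtain ⟨c, σ, hcσ, hc1, hσ1⟩ := exists_isCoshSinhPair hs
  have hr : rFun q b B lam = (B + 1) * c 1 + (B - 1) * b * σ 1 := by rw [rFun, hc1, hσ1]
  have hrpos : 0 < rFun q b B lam := hr ▸ add_one_mul_add_sub_one_mul_pos hB hbs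
    (hc1 ▸ tsum_nonneg fun n => div_nonneg (pow_nonneg hs n) (Nat.cast_nonneg _))
    (hcσ.sq_sub_mul_sq 1)
  have hleft := exp_mul_wronskian_eq (by norm_num : (-1 : ℝ) < 0) hfl
    (fun x hx => hode x (Or.inl hx)) (v := fun x => σ (x + 1)) (v' := fun x => c (x + 1))
    (fun x => (hcσ.hasDerivAt_snd _).comp_add_const x 1)
    (fun x => (hcσ.hasDerivAt_fst _).comp_add_const x 1)
  have hright := exp_mul_wronskian_eq (by norm_num : (0 : ℝ) < 1) hfr
    (fun x hx => hode x (Or.inr hx)) (v := fun x => σ (1 - x)) (v' := fun x => -c (1 - x))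
    (fun x => (hcσ.hasDerivAt_snd _).comp_const_sub 1 x)
    (fun x => ((hcσ.hasDerivAt_fst _).comp_const_sub 1 x).neg.congr_deriv (neg_neg _))
  simp only [mul_zero, exp_zero, zero_add, one_mul, mul_neg, mul_one, hf1, hf2, neg_add_cancel,
    sub_self, sub_zero, hcσ.fst_zero, hcσ.snd_zero] at hleft hright
  refine ⟨hrpos, eq_div_of_mul_eq hrpos.ne' ?_⟩
  rw [hr]
  linear_combination hleft + B * hright + σ 1 * hjump

theorem brokenSolution_value_at_zero_up
    (q b B : ℝ) (hq : 1 < q) (hB : 0 < B) (lam : ℝ) (hlam : 0 ≤ lam) (f : ℝ → ℝ)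
    (hf : IsBrokenSolution q b B lam f) (hf1 : f (-1) = 0) (hf2 : f 1 = 1) :
    0 < rFun q b B lam ∧ f 0 = B * Real.exp b / rFun q b B lam :=
  brokenSolution_value_at_zero_up_general q b B hB lam hlam f hf hf1 hf2
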